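/- For all 1 ≤ i,j ≤ n, k ∈ ℤ, and nonzero l ∈ ℤ, the commutator identity [a*_i(l), x*_j⁺(k)] = ([(α_i|α_j)·l]/l) · x*_j⁺(k+l) holds in M_{n+1}(R). -/

import Mathlib

noncomputable section

open LaurentPolynomial

/-- The base field `F = ℚ(q)`. -/
abbrev F : Type := RatFunc ℚ

/-- The Laurent polynomial ring `R = F[z, z⁻¹]`. -/
abbrev R : Type := LaurentPolynomial F

/-- The generator `q` of `ℚ(q)`. -/
def q : F := RatFunc.X

/-- The quantum integer `[m] = (q^m − q^{−m})/(q − q^{−1})`. -/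
def qint (m : ℤ) : F := (q ^ m - q ^ (-m)) / (q - q⁻¹)

/-- The A_n inner product `(α_i|α_j)` on simple roots (1-based indices). -/
def ip (i j : ℕ) : ℤ := if i = j then 2 else if i + 1 = j ∨ j + 1 = i then -1 else 0

/-- The matrix unit `E_{ab} ∈ M_N(R)`, with 1-based labels `a b`. -/
def E (N a b : ℕ) : Matrix (Fin N) (Fin N) R :=
  Matrix.of fun r s => if (r : ℕ) + 1 = a ∧ (s : ℕ) + 1 = b then (1 : R) else 0

/-- The element `(q^c z)^k ∈ R`. -/
def zq (c k : ℤ) : R := C (q ^ (c * k)) * T k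

/-- `x_j⁺(k) = (q^j z)^k E_{j,j+1}` in `M_{n+1}(R)`. -/
def xp (n j : ℕ) (k : ℤ) : Matrix (Fin (n+1)) (Fin (n+1)) R :=
  zq j k • E (n+1) j (j+1)

/-- `x_j⁻(k) = (q^j z)^k E_{j+1,j}` in `M_{n+1}(R)`. -/
def xm (n j : ℕ) (k : ℤ) : Matrix (Fin (n+1)) (Fin (n+1)) R :=
  zq j k • E (n+1) (j+1) j

/-- `a_j(l) = ([l]/l)(q^j z)^l (q^{−l}E_{j,j} − q^l E_{j+1,j+1})` in `M_{n+1}(R)`. -/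
def aop (n j : ℕ) (l : ℤ) : Matrix (Fin (n+1)) (Fin (n+1)) R :=
  (C (qint l / (l : F)) * zq j l) •
    (C (q ^ (-l)) • E (n+1) j j - C (q ^ l) • E (n+1) (j+1) (j+1))

/-- `x*_j⁺(k) = (−q^{−1})(q^{−j}z)^k E_{j+1,j}` in `M_{n+1}(R)`. -/
def xps (n j : ℕ) (k : ℤ) : Matrix (Fin (n+1)) (Fin (n+1)) R :=
  ((-(C q⁻¹)) * zq (-(j : ℤ)) k) • E (n+1) (j+1) j

/-- `x*_j⁻(k) = (−q)(q^{−j}z)^k E_{j,j+1}` in `M_{n+1}(R)`. -/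
def xms (n j : ℕ) (k : ℤ) : Matrix (Fin (n+1)) (Fin (n+1)) R :=
  ((-(C q)) * zq (-(j : ℤ)) k) • E (n+1) j (j+1)

/-- `a*_j(l) = ([l]/l)(q^{−j}z)^l (q^{−l}E_{j+1,j+1} − q^l E_{j,j})` in `M_{n+1}(R)`. -/
def aops (n j : ℕ) (l : ℤ) : Matrix (Fin (n+1)) (Fin (n+1)) R :=
  (C (qint l / (l : F)) * zq (-(j : ℤ)) l) •
    (C (q ^ (-l)) • E (n+1) (j+1) (j+1) - C (q ^ l) • E (n+1) j j)

/-! `a*_i(l)` is diagonal, so commuting it with the matrix unit `E_{j+1,j}` multiplies that unit by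
the difference of its diagonal entries at `j+1` and `j`. Trading the prefactor `(q^{−i}z)^l` for
`(q^{−j}z)^l` costs `q^{(j−i)l}`, and the claim becomes an identity of quantum integers:
`[l](q^l + q^{−l}) = [2l]` for `i = j`, and `−[l] = [−l]` for `|i − j| = 1`. -/

lemma q_ne_zero : q ≠ 0 := RatFunc.X_ne_zero

lemma qint_neg (m : ℤ) : qint (-m) = -qint m := by
  rw [qint, qint, neg_neg, ← neg_sub, neg_div]

lemma qint_two_mul (m : ℤ) : qint (2 * m) = qint m * (q ^ m + q ^ (-m)) := by
  rw [qint, qint, div_mul_eq_mul_div, two_mul, neg_add, zpow_add₀ q_ne_zero,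
    zpow_add₀ q_ne_zero]
  ring

lemma zq_add (c k l : ℤ) : zq c (k + l) = zq c k * zq c l := by
  rw [zq, zq, zq, T_add, mul_add, zpow_add₀ q_ne_zero, map_mul]
  ring

lemma zq_base_add (c d k : ℤ) : zq (c + d) k = C (q ^ (d * k)) * zq c k := by
  rw [zq, zq, add_mul, zpow_add₀ q_ne_zero, map_mul]
  ring

open Matrix

lemma diagonal_mul_E_sub_E_mul_diagonal (N a b : ℕ) (d : ℕ → R) :
    diagonal (fun r : Fin N => d (r + 1)) * E N a b -
        E N a b * diagonal (fun r : Fin N => d (r + 1)) =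
      (d a - d b) • E N a b := by
  ext r s : 1
  simp only [Matrix.sub_apply, diagonal_mul, mul_diagonal, Matrix.smul_apply, E, of_apply,
    smul_eq_mul]
  split_ifs with h
  · rw [h.1, h.2]; ring
  · simp

def aopsDiag (i : ℕ) (l : ℤ) (m : ℕ) : F :=
  (if m = i + 1 then q ^ (-l) else 0) - (if m = i then q ^ l else 0)

lemma aops_eq_smul_diagonal (n i : ℕ) (l : ℤ) :
    aops n i l = (C (qint l / (l : F)) * zq (-(i : ℤ)) l) •
      diagonal (fun r : Fin (n + 1) => C (aopsDiag i l (r + 1))) := by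
  rw [aops]
  congr 1
  ext r s : 1
  by_cases hrs : r = s
  · subst hrs
    simp only [Matrix.sub_apply, Matrix.smul_apply, E, of_apply, diagonal_apply_eq, aopsDiag,
      and_self, smul_eq_mul, mul_ite, mul_one, mul_zero, map_sub, apply_ite C, map_zero]
  · have hrs' : (r : ℕ) ≠ s := Fin.val_ne_of_ne hrs
    simp only [Matrix.sub_apply, Matrix.smul_apply, E, of_apply, diagonal_apply_ne _ hrs]
    rw [if_neg (by omega), if_neg (by omega), smul_zero, smul_zero, sub_zero]

lemma qint_mul_aopsDiag (i j : ℕ) (l : ℤ) :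
    qint l * q ^ (((j : ℤ) - i) * l) * (aopsDiag i l (j + 1) - aopsDiag i l j) =
      qint (ip i j * l) := by
  unfold aopsDiag ip
  rcases eq_or_ne i j with rfl | hij
  · simp [qint_two_mul, add_comm]
  rcases eq_or_ne (j + 1) i with rfl | hji
  · simp [show j ≠ j + 1 + 1 by omega, qint_neg, zpow_ne_zero l q_ne_zero]
  rcases eq_or_ne (i + 1) j with rfl | hij'
  · simp [show i + 1 + 1 ≠ i by omega, qint_neg, zpow_ne_zero l q_ne_zero]
  simp [hij, hji, hij', Ne.symm hij, Ne.symm hij', qint]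

theorem as_xps_comm_general (n : ℕ) (i j : ℕ) (k l : ℤ) :
    aops n i l * xps n j k - xps n j k * aops n i l =
      C (qint (ip i j * l) / (l : F)) • xps n j (k + l) := by
  rw [aops_eq_smul_diagonal, xps, xps, smul_mul_smul_comm, smul_mul_smul_comm,
    mul_comm (-C q⁻¹ * _), ← smul_sub,
    diagonal_mul_E_sub_E_mul_diagonal _ _ _ (fun m => C (aopsDiag i l m)), smul_smul, smul_smul]
  congr 1
  rw [← qint_mul_aopsDiag i j l, zq_add, show -(i : ℤ) = -j + (j - i) by ring, zq_base_add]
  rw [mul_div_right_comm, mul_div_right_comm, map_mul, map_mul, map_sub]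
  ring

/-- `[a*_i(l), x*_j⁺(k)] = ([(α_i|α_j)l]/l) x*_j⁺(k+l)` in `M_{n+1}(R)`. -/
theorem as_xps_comm (n : ℕ) (hn : 1 ≤ n) (i j : ℕ) (hi1 : 1 ≤ i) (hin : i ≤ n)
    (hj1 : 1 ≤ j) (hjn : j ≤ n) (k l : ℤ) (hl : l ≠ 0) :
    aops n i l * xps n j k - xps n j k * aops n i l =
      C (qint (ip i j * l) / (l : F)) • xps n j (k + l) :=
  as_xps_comm_general n i j k l
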